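/- arXiv:2101.04044 — 3 statements merged into one kernel-verified Lean document; each statement's English description precedes it below -/
import Mathlib

section
/- Let V and W be Banach spaces, T : V → W a Fredholm operator, and K : V → W a compact linear operator. Then T + K is Fredholm and has the same index as T. -/
open Module

variable {V W : Type*} [NormedAddCommGroup V] [NormedSpace ℝ V]
  [NormedAddCommGroup W] [NormedSpace ℝ W]

/-- A bounded linear operator between Banach spaces is Fredholm if its kernel is
finite dimensional, its range is closed, and its cokernel is finite dimensional. -/
def IsFredholm (T : V →L[ℝ] W) : Prop :=
  FiniteDimensional ℝ (LinearMap.ker (T : V →ₗ[ℝ] W)) ∧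
  IsClosed (LinearMap.range (T : V →ₗ[ℝ] W) : Set W) ∧
  FiniteDimensional ℝ (W ⧸ LinearMap.range (T : V →ₗ[ℝ] W))

/-- The Fredholm index: dim ker T − dim coker T. -/
noncomputable def fredholmIndex (T : V →L[ℝ] W) : ℤ :=
  (finrank ℝ (LinearMap.ker (T : V →ₗ[ℝ] W)) : ℤ) - (finrank ℝ (W ⧸ LinearMap.range (T : V →ₗ[ℝ] W)) : ℤ)

/-!
A Fredholm operator `T` has an inverse `S` modulo finite-rank operators, and `S` is then also an
inverse of `T + K` modulo compact operators. So it suffices to show that an operator with such a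
parametrix is Fredholm, and that `ind S + ind A = 0` for it; by additivity of the index under
composition, both reduce to the Riesz theory of `1 + C` with `C` compact: it is Fredholm of
index zero.

For the latter, the kernel of `1 + C` is finite dimensional because `C` acts on it as `-1`. Adding
a finite-rank map that sends the kernel into a complement `Z` of the range, injectively or onto
`Z`, yields an operator `1 + C'` that is injective or surjective. By the Fredholm alternative an
injective `1 + C'` is invertible, and a surjective one is injective because the kernels of its
powers stabilise (Riesz's lemma against compactness). Invertibility then shows that the range of
`1 + C` is closed and that the kernel is mapped isomorphically onto a complement of the range.
-/

open Function LinearMap Submodule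

section CompactOperator

variable {𝕜 : Type*} [NontriviallyNormedField 𝕜] {E F : Type*}
  [NormedAddCommGroup E] [NormedSpace 𝕜 E] [NormedAddCommGroup F] [NormedSpace 𝕜 F]

theorem isCompactOperator_of_finiteDimensional_range [LocallyCompactSpace 𝕜] (f : E →L[𝕜] F)
    [FiniteDimensional 𝕜 f.range] : IsCompactOperator f := by
  have : ProperSpace f.range := FiniteDimensional.proper 𝕜 _
  exact (isCompactOperator_of_locallyCompactSpace_dom
    (f.codRestrict f.range (mem_range_self (f : E →ₗ[𝕜] F)))).clm_comp f.range.subtypeL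

theorem IsCompactOperator.exists_norm_sub_lt {f : E →L[𝕜] F} (hf : IsCompactOperator f)
    {u : ℕ → E} {R : ℝ} (hu : ∀ n, ‖u n‖ ≤ R) {ε : ℝ} (hε : 0 < ε) :
    ∃ m n, m < n ∧ ‖f (u n) - f (u m)‖ < ε := by
  obtain ⟨K, hK, hfK⟩ := hf.image_closedBall_subset_compact R
  obtain ⟨y, -, φ, hφ, hlim⟩ :=
    hK.tendsto_subseq fun n ↦ hfK ⟨u n, by simpa using hu n, rfl⟩
  obtain ⟨N, hN⟩ := Metric.cauchySeq_iff'.mp hlim.cauchySeq ε hε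
  exact ⟨φ N, φ (N + 1), hφ N.lt_succ_self, by
    simpa [dist_eq_norm] using hN (N + 1) N.le_succ⟩

end CompactOperator

theorem Submodule.exists_norm_eq_one_forall_le_norm_sub {𝕜 E : Type*} [RCLike 𝕜]
    [NormedAddCommGroup E] [NormedSpace 𝕜 E] {F G : Submodule 𝕜 E} (hF : IsClosed (F : Set E))
    (hFG : F < G) {r : ℝ} (hr : r < 1) : ∃ x ∈ G, ‖x‖ = 1 ∧ ∀ y ∈ F, r ≤ ‖x - y‖ := by
  obtain ⟨x, hxG, hxF⟩ := SetLike.exists_of_lt hFG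
  obtain ⟨⟨x₀, hx₀⟩, -, hnorm, hsep⟩ := riesz_lemma_of_lt_one (F := F.comap G.subtype)
    (hF.preimage continuous_subtype_val) ⟨⟨x, hxG⟩, hxF⟩ hr
  exact ⟨x₀, hx₀, hnorm, fun y hy ↦ hsep ⟨y, hFG.le hy⟩ hy⟩

universe u in
theorem exists_linearMap_injective_or_surjective {K : Type*} {M N : Type u} [DivisionRing K]
    [AddCommGroup M] [Module K M] [AddCommGroup N] [Module K N] :
    ∃ f : M →ₗ[K] N, Injective f ∨ Surjective f := by
  rcases le_total (Module.rank K M) (Module.rank K N) with h | h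
  · obtain ⟨f, hf⟩ := rank_le_iff_exists_linearMap.mp h
    exact ⟨f, .inl hf⟩
  · obtain ⟨g, hg⟩ := rank_le_iff_exists_linearMap.mp h
    obtain ⟨f, hfg⟩ := g.exists_leftInverse_of_injective (ker_eq_bot.mpr hg)
    exact ⟨f, .inr fun x ↦ ⟨g x, congr($hfg x)⟩⟩

theorem Module.End.injective_of_surjective_of_ker_pow_succ_le {R M : Type*} [Ring R]
    [AddCommGroup M] [Module R M] {f : Module.End R M} (hf : Surjective f) {n : ℕ}
    (hn : ker (f ^ (n + 1)) ≤ ker (f ^ n)) : Function.Injective f := by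
  rw [← ker_eq_bot, eq_bot_iff]
  intro x hx
  obtain ⟨y, rfl⟩ := (Module.End.coe_pow f n ▸ hf.iterate n : Surjective ⇑(f ^ n)) x
  have hy : (f ^ (n + 1)) y = 0 := by rwa [pow_succ', Module.End.mul_apply]
  exact hn hy

section FiniteRankCorrection

variable {R M N : Type*} [Ring R] [AddCommGroup M] [Module R M] [AddCommGroup N] [Module R N]

namespace LinearMap

theorem sub_apply_mem_ker {p : Submodule R M} {P : M →ₗ[R] p} (hP : ∀ k : p, P k = k) (x : M) :
    x - P x ∈ ker P := by
  rw [mem_ker, map_sub, hP, sub_self]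

variable {A : M →ₗ[R] N} {P : M →ₗ[R] ker A} {J : ker A →ₗ[R] N}

theorem add_comp_apply_sub_projection (hP : ∀ k : ker A, P k = k) (x : M) :
    (A + J ∘ₗ P) (x - P x) = A x := by
  simp [mem_ker.mp (sub_apply_mem_ker hP x)]

theorem add_comp_apply_coe (hP : ∀ k : ker A, P k = k) (k : ker A) : (A + J ∘ₗ P) k = J k := by
  simp [hP]

theorem injective_add_comp (hP : ∀ k : ker A, P k = k) (hJ : Injective J)
    (hAJ : Disjoint (range A) (range J)) : Injective (A + J ∘ₗ P) := by
  rw [← ker_eq_bot, eq_bot_iff]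
  intro x (hx : A x + J (P x) = 0)
  have hAx : A x = 0 := disjoint_iff_inf_le.mp hAJ
    ⟨mem_range_self A x, ⟨-P x, by rw [map_neg, eq_neg_of_add_eq_zero_left hx]⟩⟩
  have hPx : P x = 0 := hJ (by rw [map_zero, ← neg_eq_zero, ← eq_neg_of_add_eq_zero_left hx, hAx])
  simpa [hPx] using congr(Subtype.val $(hP ⟨x, hAx⟩)).symm

theorem surjective_add_comp (hP : ∀ k : ker A, P k = k) (hAJ : Codisjoint (range A) (range J)) :
    Surjective (A + J ∘ₗ P) := by
  rw [← range_eq_top, eq_top_iff, ← hAJ.eq_top, sup_le_iff]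
  constructor
  · rintro _ ⟨x, rfl⟩
    exact ⟨x - P x, add_comp_apply_sub_projection hP x⟩
  · rintro _ ⟨k, rfl⟩
    exact ⟨k, add_comp_apply_coe hP k⟩

theorem injective_and_isCompl_of_bijective_add_comp (hP : ∀ k : ker A, P k = k)
    (hE : Bijective (A + J ∘ₗ P)) : Injective J ∧ IsCompl (range A) (range J) := by
  refine ⟨fun k l hkl ↦ Subtype.ext (hE.1 ?_), ⟨?_, ?_⟩⟩
  · rw [add_comp_apply_coe hP, add_comp_apply_coe hP, hkl]
  · rw [disjoint_iff_inf_le]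
    rintro _ ⟨⟨x, rfl⟩, k, hk⟩
    have hxk : x - P x = k :=
      hE.1 (by rw [add_comp_apply_sub_projection hP, add_comp_apply_coe hP, hk])
    have hk0 : k = 0 := by rw [← hP k, ← hxk, mem_ker.mp (sub_apply_mem_ker hP x)]
    rw [mem_bot, ← hk, hk0, map_zero]
  · rw [codisjoint_iff, eq_top_iff]
    rintro y -
    obtain ⟨x, rfl⟩ := hE.2 y
    exact add_mem_sup (mem_range_self A x) (mem_range_self J (P x))

theorem range_eq_map_ker_add_comp (hP : ∀ k : ker A, P k = k) :
    range A = map (A + J ∘ₗ P) (ker P) := by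
  ext y
  constructor
  · rintro ⟨x, rfl⟩
    exact ⟨x - P x, sub_apply_mem_ker hP x, add_comp_apply_sub_projection hP x⟩
  · rintro ⟨x, hx : P x = 0, rfl⟩
    exact ⟨x, by simp [hx]⟩

end LinearMap

end FiniteRankCorrection

namespace IsCompactOperator

variable {𝕜 X : Type*} [RCLike 𝕜] [NormedAddCommGroup X] [NormedSpace 𝕜 X] {C : X →L[𝕜] X}

theorem finiteDimensional_ker_one_add (hC : IsCompactOperator C) :
    FiniteDimensional 𝕜 (1 + C).ker := by
  have hCx : ∀ x ∈ (1 + C).ker, C x = -x := fun x hx ↦ eq_neg_of_add_eq_zero_right hx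
  have hCker : ∀ x ∈ (1 + C).ker, C x ∈ (1 + C).ker := fun x hx ↦ hCx x hx ▸ neg_mem hx
  have hid : (_root_.id : (1 + C).ker → (1 + C).ker) = -(C : X →ₗ[𝕜] X).restrict hCker := by
    ext ⟨x, hx⟩
    change x = -C x
    rw [hCx x hx, neg_neg]
  apply FiniteDimensional.of_isCompactOperator_id
  rw [hid]
  exact (hC.restrict hCker (ContinuousLinearMap.isClosed_ker (1 + C))).neg

theorem exists_ker_pow_succ_le (hC : IsCompactOperator C) :
    ∃ n, ker (((1 + C : X →L[𝕜] X) : Module.End 𝕜 X) ^ (n + 1)) ≤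
      ker (((1 + C : X →L[𝕜] X) : Module.End 𝕜 X) ^ n) := by
  set f : Module.End 𝕜 X := ((1 + C : X →L[𝕜] X) : X →ₗ[𝕜] X)
  by_contra! h
  have hmono : Monotone fun n ↦ ker (f ^ n) := f.iterateKer.monotone
  have hclosed (n : ℕ) : IsClosed (ker (f ^ n) : Set X) := by
    rw [← ContinuousLinearMap.toLinearMap_pow]
    exact ContinuousLinearMap.isClosed_ker _
  choose u hu_mem hu_norm hu_sep using fun n ↦ Submodule.exists_norm_eq_one_forall_le_norm_sub
    (hclosed n) (lt_of_le_not_ge (hmono n.le_succ) (h n)) (r := 1 / 2) (by norm_num)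
  have hfu (k : ℕ) : f (u k) ∈ ker (f ^ k) := by
    rw [mem_ker, ← Module.End.mul_apply, ← pow_succ]
    exact hu_mem k
  obtain ⟨m, n, hmn, hlt⟩ := hC.exists_norm_sub_lt (fun n ↦ (hu_norm n).le) one_half_pos
  refine hlt.not_ge ?_
  have hmem : f (u n) - f (u m) + u m ∈ ker (f ^ n) :=
    add_mem (sub_mem (hfu n) (hmono hmn.le (hfu m))) (hmono hmn (hu_mem m))
  have hCu : C (u n) - C (u m) = -(u n - (f (u n) - f (u m) + u m)) := by
    change _ = -(u n - ((u n + C (u n)) - (u m + C (u m)) + u m))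
    abel
  rw [hCu, norm_neg]
  exact hu_sep n _ hmem

theorem injective_one_add_of_surjective (hC : IsCompactOperator C)
    (h : Surjective (1 + C : X →L[𝕜] X)) : Injective (1 + C : X →L[𝕜] X) :=
  have ⟨_, hn⟩ := hC.exists_ker_pow_succ_le
  Module.End.injective_of_surjective_of_ker_pow_succ_le h hn

theorem surjective_one_add_of_injective [CompleteSpace X] (hC : IsCompactOperator C)
    (h : Injective (1 + C : X →L[𝕜] X)) : Surjective (1 + C : X →L[𝕜] X) := by
  rcases hC.hasEigenvalue_or_mem_resolventSet (μ := -1) (by simp) with hev | hres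
  · obtain ⟨x, hx⟩ := hev.exists_hasEigenvector
    refine absurd (h ?_) hx.2
    have hCx : C x = -x := by simpa using hx.apply_eq_smul
    simp [hCx]
  · rw [spectrum.mem_resolventSet_iff, map_neg, map_one, ← neg_add', IsUnit.neg_iff,
      ContinuousLinearMap.isUnit_iff_bijective] at hres
    exact hres.2

theorem exists_bijective_one_add_add_comp [CompleteSpace X] (hC : IsCompactOperator C) :
    ∃ (P : X →L[𝕜] (1 + C).ker) (J : (1 + C).ker →L[𝕜] X),
      (∀ k : (1 + C).ker, P k = k) ∧ Bijective (1 + C + J ∘L P : X →L[𝕜] X) := by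
  have := hC.finiteDimensional_ker_one_add
  obtain ⟨P, hP⟩ := Submodule.ClosedComplemented.of_finiteDimensional (1 + C).ker
  obtain ⟨Z, hZ⟩ := (1 + C).range.exists_isCompl
  obtain ⟨J₀, hJ₀⟩ := exists_linearMap_injective_or_surjective (K := 𝕜) (M := (1 + C).ker) (N := Z)
  let J : (1 + C).ker →L[𝕜] X := LinearMap.toContinuousLinearMap (Z.subtype ∘ₗ J₀)
  have hJZ : J.range ≤ Z := (range_comp_le_range _ _).trans Z.range_subtype.le
  have hcompact : IsCompactOperator (C + J ∘L P) :=
    have : FiniteDimensional 𝕜 (J ∘L P).range :=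
      Submodule.finiteDimensional_of_le (S₂ := J.range) <| by
        rw [ContinuousLinearMap.toLinearMap_comp]
        exact range_comp_le_range _ _
    hC.add (isCompactOperator_of_finiteDimensional_range _)
  have hE : 1 + C + J ∘L P = 1 + (C + J ∘L P) := add_assoc _ _ _
  refine ⟨P, J, hP, ?_⟩
  rcases hJ₀ with hinj | hsurj
  · have hinj' : Injective (1 + C + J ∘L P : X →L[𝕜] X) :=
      injective_add_comp hP (Z.subtype_injective.comp hinj) (hZ.disjoint.mono_right hJZ)
    exact ⟨hinj', hE ▸ hcompact.surjective_one_add_of_injective (hE ▸ hinj')⟩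
  · have hJ : J.range = Z := by
      rw [← Z.range_subtype]
      exact range_comp_of_range_eq_top _ (range_eq_top.mpr hsurj)
    have hsurj' : Surjective (1 + C + J ∘L P : X →L[𝕜] X) :=
      surjective_add_comp hP (hJ ▸ hZ.codisjoint)
    exact ⟨hE ▸ hcompact.injective_one_add_of_surjective (hE ▸ hsurj'), hsurj'⟩

end IsCompactOperator

theorem IsCompactOperator.isFredholm_one_add {X : Type*} [NormedAddCommGroup X]
    [NormedSpace ℝ X] [CompleteSpace X] {C : X →L[ℝ] X} (hC : IsCompactOperator C) :
    IsFredholm (1 + C) ∧ fredholmIndex (1 + C) = 0 := by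
  obtain ⟨P, J, hP, hE⟩ := hC.exists_bijective_one_add_add_comp
  obtain ⟨hJ, hcompl⟩ := injective_and_isCompl_of_bijective_add_comp hP hE
  have := hC.finiteDimensional_ker_one_add
  let e : (X ⧸ (1 + C).range) ≃ₗ[ℝ] (1 + C).ker :=
    (quotientEquivOfIsCompl _ _ hcompl).trans (LinearEquiv.ofInjective _ hJ).symm
  have hclosed : IsClosed ((1 + C).range : Set X) := by
    let E := ContinuousLinearEquiv.ofBijective (1 + C + J ∘L P)
      (ker_eq_bot.mpr hE.1) (range_eq_top.mpr hE.2)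
    rw [range_eq_map_ker_add_comp hP, map_coe]
    exact E.toHomeomorph.isClosedMap _ (ContinuousLinearMap.isClosed_ker P)
  exact ⟨⟨inferInstance, hclosed, e.symm.finiteDimensional⟩, by
    rw [fredholmIndex, e.finrank_eq, sub_self]⟩

theorem ContinuousLinearMap.isStrictMap_of_isClosed_range {𝕜 E F : Type*}
    [NontriviallyNormedField 𝕜] [NormedAddCommGroup E] [NormedSpace 𝕜 E] [CompleteSpace E]
    [NormedAddCommGroup F] [NormedSpace 𝕜 F] [CompleteSpace F] {f : E →L[𝕜] F}
    (hf : IsClosed (f.range : Set F)) : Topology.IsStrictMap f := by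
  have : CompleteSpace f.range := hf.completeSpace_coe
  let g := f.codRestrict f.range (mem_range_self (f : E →ₗ[𝕜] F))
  have hg : Surjective g := fun ⟨_, x, hx⟩ ↦ ⟨x, Subtype.ext hx⟩
  exact (LinearMap.isStrictMap_iff_isOpenQuotientMap_rangeRestrict (f := (f : E →ₗ[𝕜] F))).mpr
    ⟨hg, g.continuous, g.isOpenMap hg⟩

section Parametrix

variable {𝕜 E F : Type*} [NontriviallyNormedField 𝕜] [NormedAddCommGroup E] [NormedSpace 𝕜 E]
  [NormedAddCommGroup F] [NormedSpace 𝕜 F]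

def IsParametrix (S : F →L[𝕜] E) (A : E →L[𝕜] F) : Prop :=
  IsCompactOperator (S ∘L A - 1 : E →L[𝕜] E) ∧ IsCompactOperator (A ∘L S - 1 : F →L[𝕜] F)

theorem IsParametrix.symm {S : F →L[𝕜] E} {A : E →L[𝕜] F} (h : IsParametrix S A) :
    IsParametrix A S :=
  ⟨h.2, h.1⟩

theorem IsParametrix.add_compact {S : F →L[𝕜] E} {A : E →L[𝕜] F} (h : IsParametrix S A)
    {K : E →L[𝕜] F} (hK : IsCompactOperator K) : IsParametrix S (A + K) := by
  constructor
  · rw [ContinuousLinearMap.comp_add, add_sub_right_comm]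
    exact h.1.add (hK.clm_comp S)
  · rw [ContinuousLinearMap.add_comp, add_sub_right_comm]
    exact h.2.add (hK.comp_clm S)

end Parametrix

section Fredholm

variable [CompleteSpace V] [CompleteSpace W]

theorem IsParametrix.isFredholm {S : W →L[ℝ] V} {A : V →L[ℝ] W} (h : IsParametrix S A) :
    IsFredholm A := by
  obtain ⟨⟨hSA, -, -⟩, -⟩ := h.1.isFredholm_one_add
  obtain ⟨⟨-, hAS_closed, hAS_coker⟩, -⟩ := h.2.isFredholm_one_add
  rw [add_sub_cancel, ContinuousLinearMap.toLinearMap_comp] at hSA hAS_closed hAS_coker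
  have hle : ((A : V →ₗ[ℝ] W) ∘ₗ (S : W →ₗ[ℝ] V)).range ≤ A.range := range_comp_le_range _ _
  exact ⟨Submodule.finiteDimensional_of_le (ker_le_ker_comp (A : V →ₗ[ℝ] W) (S : W →ₗ[ℝ] V)),
    Submodule.isClosed_mono_of_finiteDimensional_quotient hAS_closed hle,
    Submodule.CoFG.of_le hle hAS_coker⟩

theorem IsParametrix.fredholmIndex_add_eq_zero {S : W →L[ℝ] V} {A : V →L[ℝ] W}
    (h : IsParametrix S A) : fredholmIndex S + fredholmIndex A = 0 := by
  obtain ⟨hA_ker, -, hA_coker⟩ := h.isFredholm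
  obtain ⟨hS_ker, -, hS_coker⟩ := h.symm.isFredholm
  obtain ⟨-, hSA⟩ := h.1.isFredholm_one_add
  rw [add_sub_cancel] at hSA
  change (S : W →ₗ[ℝ] V).index + (A : V →ₗ[ℝ] W).index = 0
  rw [← index_comp, ← ContinuousLinearMap.toLinearMap_comp]
  exact hSA

theorem IsFredholm.exists_isParametrix {T : V →L[ℝ] W} (hT : IsFredholm T) :
    ∃ S, IsParametrix S T := by
  obtain ⟨hker, hclosed, hcoker⟩ := hT
  have hT' : T.IsFredholm :=
    ⟨T.isStrictMap_of_isClosed_range hclosed, hclosed, hker, hcoker, .of_finiteDimensional _⟩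
  obtain ⟨S, hST, hTS⟩ := hT'.exists_isQuasiInverse
  rw [IsLeftQuasiInverse, FiniteRangeSetoid.equiv_iff_hasNoetherianRange] at hST
  rw [IsRightQuasiInverse, FiniteRangeSetoid.equiv_iff_hasNoetherianRange] at hTS
  have : FiniteDimensional ℝ (S ∘L T - 1 : V →L[ℝ] V).range :=
    IsNoetherian.iff_fg.mp hST.isNoetherian_range
  have : FiniteDimensional ℝ (T ∘L S - 1 : W →L[ℝ] W).range :=
    IsNoetherian.iff_fg.mp hTS.isNoetherian_range
  exact ⟨S, isCompactOperator_of_finiteDimensional_range _,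
    isCompactOperator_of_finiteDimensional_range _⟩

end Fredholm

/-- Stability of Fredholmness and of the index under compact perturbations. -/
theorem fredholm_add_compact [CompleteSpace V] [CompleteSpace W]
    (T K : V →L[ℝ] W) (hT : IsFredholm T) (hK : IsCompactOperator (⇑K)) :
    IsFredholm (T + K) ∧ fredholmIndex (T + K) = fredholmIndex T := by
  obtain ⟨S, hS⟩ := hT.exists_isParametrix
  have hSK := hS.add_compact hK
  exact ⟨hSK.isFredholm, by linarith [hS.fredholmIndex_add_eq_zero, hSK.fredholmIndex_add_eq_zero]⟩
end

section
/- Let E : B ⊆ V → ℝ be a C¹ function on an open ball B around 0 in a Banach space V, with E(0) a critical value, and suppose the Łojasiewicz–Simon inequality |E(f) − E(0)|^{1−α} ≤ C ‖δE_f‖ holds on B for some α ∈ (0, 1/2] and C > 0. If u : [0, ∞) → B is a C¹ gradient-flow trajectory in a Hilbert space H ⊇ V, satisfying ⟨u'(t), v⟩_H = −δE_{u(t)}(v) and E(u(t)) > E(0) for all t, then defining G(t) = (E(u(t)) − E(0))^α there holds G'(t) ≤ −(α/C) ‖u'(t)‖_H for all t ≥ 0. -/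
/-!
Along the flow, `δE_{u(t)} = -⟪u'(t), ·⟫`, so `‖δE_{u(t)}‖ = ‖u'(t)‖` and
`(E ∘ u)'(t) = -‖u'(t)‖²`. By the chain rule
`G'(t) = -α (E(u(t)) - E(0))^{α-1} ‖u'(t)‖²`, and the Łojasiewicz inequality bounds
`(E(u(t)) - E(0))^{α-1}` from below by `(C ‖u'(t)‖)⁻¹`.
-/

open RealInnerProductSpace

theorem ContinuousLinearMap.eq_neg_innerSL_of_inner_eq_neg {H : Type*}
    [NormedAddCommGroup H] [InnerProductSpace ℝ H] {L : H →L[ℝ] ℝ} {w : H}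
    (h : ∀ v, ⟪w, v⟫ = -L v) : L = -innerSL ℝ w := by
  ext v
  simp only [neg_apply, innerSL_apply_apply, h, neg_neg]

theorem div_mul_le_rpow_sub_one_mul_sq_of_rpow_one_sub_le {d a α C : ℝ} (hd : 0 < d)
    (hα : 0 ≤ α) (ha : 0 ≤ a) (hLoj : d ^ (1 - α) ≤ C * a) :
    α / C * a ≤ α * d ^ (α - 1) * a ^ 2 := by
  have hCa : 0 < C * a := (Real.rpow_pos_of_pos hd _).trans_le hLoj
  have hC : 0 < C := pos_of_mul_pos_left hCa ha
  have ha' : 0 < a := pos_of_mul_pos_right hCa hC.le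
  have hinv : (C * a)⁻¹ ≤ d ^ (α - 1) := by
    rw [show α - 1 = -(1 - α) by ring, Real.rpow_neg hd.le]
    exact inv_anti₀ (Real.rpow_pos_of_pos hd _) hLoj
  calc α / C * a = α * (C * a)⁻¹ * a ^ 2 := by field_simp
    _ ≤ α * d ^ (α - 1) * a ^ 2 := by gcongr

theorem lojasiewicz_gradient_flow_decay_general
    {H : Type*} [NormedAddCommGroup H] [InnerProductSpace ℝ H]
    (ρ C α : ℝ) (hα : α ∈ Set.Ioc (0 : ℝ) (1 / 2))
    (E : H → ℝ) (dE : H → (H →L[ℝ] ℝ))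
    (hdE : ∀ f ∈ Metric.ball (0 : H) ρ, HasFDerivAt E (dE f) f)
    (hLoj : ∀ f ∈ Metric.ball (0 : H) ρ, |E f - E 0| ^ (1 - α) ≤ C * ‖dE f‖)
    (u u' : ℝ → H)
    (hu : ∀ t, 0 ≤ t → HasDerivAt u (u' t) t)
    (hflow : ∀ t, 0 ≤ t → ∀ v : H, ⟪u' t, v⟫ = -(dE (u t)) v)
    (hmem : ∀ t, 0 ≤ t → u t ∈ Metric.ball (0 : H) ρ)
    (hgt : ∀ t, 0 ≤ t → E 0 < E (u t)) :
    ∀ t, 0 ≤ t →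
      deriv (fun s => (E (u s) - E 0) ^ α) t ≤ -(α / C) * ‖u' t‖ := by
  intro t ht
  have hd : 0 < E (u t) - E 0 := sub_pos.2 (hgt t ht)
  have hgrad := ContinuousLinearMap.eq_neg_innerSL_of_inner_eq_neg (hflow t ht)
  have hG : HasDerivAt (fun s => (E (u s) - E 0) ^ α) _ t :=
    (((hdE _ (hmem t ht)).comp_hasDerivAt t (hu t ht)).sub_const (E 0)).rpow_const
      (p := α) (Or.inl hd.ne')
  have hL := hLoj _ (hmem t ht)
  rw [abs_of_pos hd, hgrad, norm_neg, innerSL_apply_norm] at hL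
  have key := div_mul_le_rpow_sub_one_mul_sq_of_rpow_one_sub_le hd hα.1.le (norm_nonneg _) hL
  rw [hG.deriv, hgrad]
  simp only [neg_apply, Function.comp_apply, innerSL_apply_apply, real_inner_self_eq_norm_sq]
  linarith

/-- Łojasiewicz–Simon differential inequality along a gradient flow: if `E` satisfies
`|E(f) − E(0)|^{1−α} ≤ C ‖δE_f‖` on a ball around the critical point `0`, and `u` is a
gradient-flow trajectory with `⟪u'(t), v⟫ = −δE_{u(t)}(v)` and `E(u(t)) > E(0)`, then
`G(t) = (E(u(t)) − E(0))^α` satisfies `G'(t) ≤ −(α/C)‖u'(t)‖`. -/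
theorem lojasiewicz_gradient_flow_decay
    {H : Type*} [NormedAddCommGroup H] [InnerProductSpace ℝ H]
    (ρ C α : ℝ) (hρ : 0 < ρ) (hC : 0 < C) (hα : α ∈ Set.Ioc (0 : ℝ) (1 / 2))
    (E : H → ℝ) (dE : H → (H →L[ℝ] ℝ))
    (hdE : ∀ f ∈ Metric.ball (0 : H) ρ, HasFDerivAt E (dE f) f)
    (hcrit : dE 0 = 0)
    (hLoj : ∀ f ∈ Metric.ball (0 : H) ρ, |E f - E 0| ^ (1 - α) ≤ C * ‖dE f‖)
    (u u' : ℝ → H)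
    (hu : ∀ t, 0 ≤ t → HasDerivAt u (u' t) t)
    (hflow : ∀ t, 0 ≤ t → ∀ v : H, ⟪u' t, v⟫ = -(dE (u t)) v)
    (hmem : ∀ t, 0 ≤ t → u t ∈ Metric.ball (0 : H) ρ)
    (hgt : ∀ t, 0 ≤ t → E 0 < E (u t)) :
    ∀ t, 0 ≤ t →
      deriv (fun s => (E (u s) - E 0) ^ α) t ≤ -(α / C) * ‖u' t‖ :=
  lojasiewicz_gradient_flow_decay_general ρ C α hα E dE hdE hLoj u u' hu hflow hmem hgt
end

section
/- Let α ∈ (0,1/2], and let e : [0,∞) → [0,∞) be a nonincreasing C¹ function with e(t) → 0, satisfying e(t)^{1−α} ≤ C √(−e'(t)) for all t with e(t) > 0, where C > 0. Then ∫_0^∞ √(−e'(t)) dt < ∞. -/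
open MeasureTheory Set Filter Topology

/-!
`G = -e^α` is monotone on `[0, ∞)` and bounded above by `0`, so its derivative is integrable on
`(0, ∞)`: by Lebesgue's theorem its integral over `[0, b]` is at most `G b - G 0 ≤ -G 0`.
Where `e > 0` the Łojasiewicz inequality gives `√(-e') ≤ (C/α) G'`; where `e = 0` the
nonnegative `e` has a local minimum, so `e' = 0`. Hence `√(-e')` is dominated by `(C/α) G'`.
-/

theorem MonotoneOn.deriv_nonneg_of_mem_nhds {g : ℝ → ℝ} {s : Set ℝ} {x : ℝ}
    (hg : MonotoneOn g s) (hs : s ∈ 𝓝 x) : 0 ≤ deriv g x := by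
  rw [← derivWithin_of_mem_nhds hs]; exact hg.derivWithin_nonneg

theorem MonotoneOn.integrableOn_Ioi_deriv {g : ℝ → ℝ} {a B : ℝ} (hg : MonotoneOn g (Ici a))
    (hB : ∀ x ∈ Ici a, g x ≤ B) : IntegrableOn (deriv g) (Ioi a) := by
  have hmono : ∀ n : ℕ, MonotoneOn g (uIcc a (a + n)) := fun n =>
    hg.mono (by rw [uIcc_of_le (by simp)]; exact Icc_subset_Ici_self)
  refine integrableOn_Ioi_of_intervalIntegral_norm_bounded (B - g a) a (b := fun n : ℕ => a + n)
    (fun n => (hmono n).intervalIntegrable_deriv.1)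
    (tendsto_atTop_add_const_left _ a tendsto_natCast_atTop_atTop)
    (Eventually.of_forall fun n => ?_)
  have hga : g a ≤ g (a + n) := hg self_mem_Ici (by simp) (by simp)
  have hmem := (hmono n).intervalIntegral_deriv_mem_uIcc
  rw [uIcc_of_le (sub_nonneg.2 hga)] at hmem
  calc ∫ x in a..a + n, ‖deriv g x‖ = ∫ x in a..a + n, deriv g x := by
        refine intervalIntegral.integral_congr_uIoo fun x hx => Real.norm_of_nonneg ?_
        rw [uIoo_of_le (by simp)] at hx
        exact hg.deriv_nonneg_of_mem_nhds (Ici_mem_nhds hx.1)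
    _ ≤ g (a + n) - g a := hmem.2
    _ ≤ B - g a := by linarith [hB (a + n) (by simp)]

theorem Real.sqrt_le_mul_rpow_of_rpow_le_mul_sqrt {x v α C : ℝ} (hx : 0 < x)
    (h : x ^ (1 - α) ≤ C * √v) : √v ≤ C * v * x ^ (α - 1) := by
  have hx' : 0 < x ^ (1 - α) := Real.rpow_pos_of_pos hx _
  have hv : 0 < √v := (Real.sqrt_nonneg v).lt_of_ne fun h0 => by
    rw [← h0, mul_zero] at h; linarith
  have hinv : x ^ (1 - α) * x ^ (α - 1) = 1 := by
    rw [← Real.rpow_add hx]; norm_num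
  calc √v = √v * x ^ (1 - α) * x ^ (α - 1) := by rw [mul_assoc, hinv, mul_one]
    _ ≤ √v * (C * √v) * x ^ (α - 1) := by gcongr
    _ = C * v * x ^ (α - 1) := by
      linear_combination C * x ^ (α - 1) * Real.sq_sqrt (Real.sqrt_pos.1 hv).le

theorem sqrt_neg_deriv_le_deriv_neg_rpow {e : ℝ → ℝ} {α C t : ℝ} (hα : α ≠ 0)
    (hd : DifferentiableAt ℝ e t) (hpos : 0 < e t)
    (hLoj : e t ^ (1 - α) ≤ C * √(-deriv e t)) :
    √(-deriv e t) ≤ C / α * deriv (fun s => -(e s ^ α)) t := by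
  have hG : deriv (fun s => -(e s ^ α)) t = -(deriv e t * α * e t ^ (α - 1)) :=
    (hd.hasDerivAt.rpow_const (Or.inl hpos.ne')).neg.deriv
  rw [hG, show C / α * -(deriv e t * α * e t ^ (α - 1)) = C * -deriv e t * e t ^ (α - 1) by
    field_simp]
  exact Real.sqrt_le_mul_rpow_of_rpow_le_mul_sqrt hpos hLoj

theorem lojasiewicz_decay_integrable_general
    (α C : ℝ) (hα : α ∈ Set.Ioc (0 : ℝ) (1 / 2)) (hC : 0 < C)
    (e : ℝ → ℝ) (he : ContDiff ℝ 1 e)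
    (hnonneg : ∀ t, 0 ≤ t → 0 ≤ e t)
    (hmono : AntitoneOn e (Set.Ici 0))
    (hLoj : ∀ t, 0 ≤ t → 0 < e t → e t ^ (1 - α) ≤ C * Real.sqrt (-(deriv e t))) :
    IntegrableOn (fun t => Real.sqrt (-(deriv e t))) (Set.Ici 0) := by
  have hα0 : 0 < α := hα.1
  have hG : MonotoneOn (fun t => -(e t ^ α)) (Ici 0) := fun s hs t ht hst =>
    neg_le_neg (Real.rpow_le_rpow (hnonneg t ht) (hmono hs ht hst) hα0.le)
  have hbound : ∀ t ∈ Ioi 0, √(-deriv e t) ≤ C / α * deriv (fun s => -(e s ^ α)) t := by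
    intro t ht
    rcases (hnonneg t (le_of_lt ht)).eq_or_lt with hzero | hpos
    · have hmin : IsLocalMin e t := by
        filter_upwards [Ioi_mem_nhds ht] with s hs
        exact hzero ▸ hnonneg s (le_of_lt hs)
      rw [hmin.deriv_eq_zero, neg_zero, Real.sqrt_zero]
      exact mul_nonneg (div_nonneg hC.le hα0.le) (hG.deriv_nonneg_of_mem_nhds (Ici_mem_nhds ht))
    · exact sqrt_neg_deriv_le_deriv_neg_rpow hα0.ne' (he.differentiable one_ne_zero t) hpos
        (hLoj t (le_of_lt ht) hpos)
  have hGint := (hG.integrableOn_Ioi_deriv fun t ht =>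
    neg_nonpos.2 (Real.rpow_nonneg (hnonneg t ht) α)).const_mul (C / α)
  rw [integrableOn_Ici_iff_integrableOn_Ioi]
  refine hGint.mono' (measurable_deriv e).neg.sqrt.aestronglyMeasurable
    (ae_restrict_of_forall_mem measurableSet_Ioi fun t ht => ?_)
  rw [Real.norm_of_nonneg (Real.sqrt_nonneg _)]
  exact hbound t ht

/-- Abstract Łojasiewicz decay lemma: if `e : [0,∞) → [0,∞)` is `C¹`, nonincreasing,
tends to `0`, and satisfies `e(t)^{1−α} ≤ C √(−e'(t))` wherever `e(t) > 0`, with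
`α ∈ (0,1/2]` and `C > 0`, then `∫_0^∞ √(−e'(t)) dt < ∞`. -/
theorem lojasiewicz_decay_integrable
    (α C : ℝ) (hα : α ∈ Set.Ioc (0 : ℝ) (1 / 2)) (hC : 0 < C)
    (e : ℝ → ℝ) (he : ContDiff ℝ 1 e)
    (hnonneg : ∀ t, 0 ≤ t → 0 ≤ e t)
    (hmono : AntitoneOn e (Set.Ici 0))
    (hlim : Filter.Tendsto e Filter.atTop (nhds 0))
    (hLoj : ∀ t, 0 ≤ t → 0 < e t → e t ^ (1 - α) ≤ C * Real.sqrt (-(deriv e t))) :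
    IntegrableOn (fun t => Real.sqrt (-(deriv e t))) (Set.Ici 0) :=
  lojasiewicz_decay_integrable_general α C hα hC e he hnonneg hmono hLoj
end
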